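/- For each u ∈ S¹, the closure in S³ of the fiber A_u = π₊⁻¹({u}) of the map π₊(z₁,z₂) = z₁z₂/|z₁z₂| equals A_u ∪ H, and this closure is homeomorphic to the closed annulus S¹ × [0,1] by a homeomorphism carrying A_u onto S¹ × (0,1) and H onto S¹ × {0,1}. Hence the pages of the open book of the positive Hopf link are open annuli whose closures are compact annuli with boundary the Hopf link H. -/

import Mathlib

noncomputable section

/-- The unit 3-sphere in ℂ². -/
def S3 : Set (ℂ × ℂ) := {p | ‖p.1‖ ^ 2 + ‖p.2‖ ^ 2 = 1}

/-- The unit circle in ℂ. -/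
def S1 : Set ℂ := {w | ‖w‖ = 1}

/-- The Hopf link `H = {(z₁,z₂) ∈ S³ : z₁z₂ = 0}`. -/
def hopfLink : Set (ℂ × ℂ) := {p ∈ S3 | p.1 * p.2 = 0}

/-- The fibration `π₊(z₁,z₂) = z₁z₂/|z₁z₂|` of the complement of the positive Hopf link. -/
def piPlus (p : ℂ × ℂ) : ℂ := p.1 * p.2 / ((‖p.1 * p.2‖ : ℝ) : ℂ)

/-- The page `A_u = π₊⁻¹({u})` of the open book of the positive Hopf link. -/
def pageA (u : ℂ) : Set (ℂ × ℂ) := {p | p ∈ S3 \ hopfLink ∧ piPlus p = u}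

/-!
The map `(w, t) ↦ (√t · w, √(1 - t) · u · w̄)` on `S¹ × [0,1]` has coordinate product
`√(t(1 - t)) · u`, so it sends `0 < t < 1` into `A_u` and `t ∈ {0, 1}` onto `H`. Its image is
`A_u ∪ H = {p ∈ S³ : z₁z₂ = |z₁z₂| u}`, a closed set, and as a continuous injection of a compact
space it is a homeomorphism onto that image. Every point of `H` is an endpoint of an arc
`t ↦ (√t · w, √(1 - t) · u · w̄)` whose interior lies in `A_u`, so `A_u ∪ H` is the closure of `A_u`.
-/

open Set ComplexConjugate

theorem exists_homeomorph_of_range_eq {X Y : Type*} [TopologicalSpace X] [CompactSpace X]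
    [TopologicalSpace Y] [T2Space Y] {f : X → Y} (hf : Continuous f)
    (hinj : Function.Injective f) {s : Set Y} (hs : range f = s) :
    ∃ e : s ≃ₜ X, ∀ p : s, f (e p) = p := by
  subst hs
  let e := (hf.isClosedEmbedding hinj).isEmbedding.toHomeomorph
  exact ⟨e.symm, fun p => congrArg Subtype.val (e.apply_symm_apply p)⟩

instance : CompactSpace S1 := by
  have : S1 = Metric.sphere (0 : ℂ) 1 := by ext; simp [S1]
  exact isCompact_iff_compactSpace.mp (this ▸ isCompact_sphere 0 1)

theorem pageA_union_hopfLink (u : ℂ) :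
    pageA u ∪ hopfLink = {p ∈ S3 | p.1 * p.2 = (‖p.1 * p.2‖ : ℂ) * u} := by
  ext p
  simp only [pageA, hopfLink, mem_union, mem_sdiff, mem_ofPred_eq]
  by_cases hp : p.1 * p.2 = 0
  · simp only [hp, norm_zero, Complex.ofReal_zero, zero_mul]
    tauto
  · rw [piPlus, div_eq_iff (by simpa using hp), mul_comm u]
    tauto

theorem isClosed_pageA_union_hopfLink (u : ℂ) : IsClosed (pageA u ∪ hopfLink) := by
  rw [pageA_union_hopfLink]
  exact (isClosed_eq (by fun_prop) continuous_const : IsClosed S3).inter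
    (isClosed_eq (by fun_prop) (by fun_prop))

theorem mem_pageA_iff_notMem_hopfLink {u : ℂ} {p : ℂ × ℂ} (hp : p ∈ pageA u ∪ hopfLink) :
    p ∈ pageA u ↔ p ∉ hopfLink :=
  ⟨fun h => h.1.2, fun h => hp.resolve_right h⟩

def pageParam (u w : ℂ) (t : ℝ) : ℂ × ℂ :=
  ((√t : ℂ) * w, (√(1 - t) : ℂ) * u * conj w)

theorem continuous_pageParam (u : ℂ) : Continuous fun q : ℂ × ℝ => pageParam u q.1 q.2 := by
  unfold pageParam; fun_prop

section pageParam

variable {u w : ℂ} {t : ℝ}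

theorem pageParam_fst_mul_snd (hw : ‖w‖ = 1) :
    (pageParam u w t).1 * (pageParam u w t).2 = ((√t * √(1 - t) : ℝ) : ℂ) * u := by
  have hw' : w * conj w = 1 := by rw [Complex.mul_conj, Complex.normSq_eq_norm_sq, hw]; norm_num
  simp only [pageParam]
  push_cast
  linear_combination ((√t : ℂ) * (√(1 - t) : ℂ) * u) * hw'

theorem pageParam_mem_S3 (hu : ‖u‖ = 1) (hw : ‖w‖ = 1) (ht : t ∈ Icc (0 : ℝ) 1) :
    pageParam u w t ∈ S3 := by
  have h₁ : √t ^ 2 = t := Real.sq_sqrt ht.1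
  have h₂ : √(1 - t) ^ 2 = 1 - t := Real.sq_sqrt (sub_nonneg.2 ht.2)
  simp [S3, pageParam, hu, hw, h₁, h₂]

theorem pageParam_mem_pageA_union_hopfLink (hu : ‖u‖ = 1) (hw : ‖w‖ = 1)
    (ht : t ∈ Icc (0 : ℝ) 1) : pageParam u w t ∈ pageA u ∪ hopfLink := by
  rw [pageA_union_hopfLink]
  refine ⟨pageParam_mem_S3 hu hw ht, ?_⟩
  rw [pageParam_fst_mul_snd hw, norm_mul, Complex.norm_real, hu, mul_one,
    Real.norm_of_nonneg (by positivity)]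

theorem pageParam_mem_hopfLink_iff (hu : ‖u‖ = 1) (hw : ‖w‖ = 1) (ht : t ∈ Icc (0 : ℝ) 1) :
    pageParam u w t ∈ hopfLink ↔ t = 0 ∨ t = 1 := by
  have hu₀ : u ≠ 0 := norm_ne_zero_iff.1 (by rw [hu]; exact one_ne_zero)
  rw [hopfLink, mem_sep_iff, and_iff_right (pageParam_mem_S3 hu hw ht), pageParam_fst_mul_snd hw,
    mul_eq_zero, or_iff_left hu₀, Complex.ofReal_eq_zero, mul_eq_zero, Real.sqrt_eq_zero ht.1,
    Real.sqrt_eq_zero (sub_nonneg.2 ht.2), sub_eq_zero, eq_comm (a := (1 : ℝ))]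

theorem pageParam_mem_pageA_iff (hu : ‖u‖ = 1) (hw : ‖w‖ = 1) (ht : t ∈ Icc (0 : ℝ) 1) :
    pageParam u w t ∈ pageA u ↔ t ∈ Ioo (0 : ℝ) 1 := by
  rw [mem_pageA_iff_notMem_hopfLink (pageParam_mem_pageA_union_hopfLink hu hw ht),
    pageParam_mem_hopfLink_iff hu hw ht, mem_Ioo, ht.1.lt_iff_ne', ht.2.lt_iff_ne, not_or]

theorem eq_and_eq_of_pageParam_eq (hu : u ≠ 0) {w' : ℂ} {t' : ℝ} (hw : ‖w‖ = 1) (hw' : ‖w'‖ = 1)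
    (ht : 0 ≤ t) (ht' : 0 ≤ t') (h : pageParam u w t = pageParam u w' t') : w = w' ∧ t = t' := by
  obtain ⟨h₁, h₂⟩ := Prod.ext_iff.1 h
  have hsqrt : √t = √t' := by
    simpa [pageParam, hw, hw', abs_of_nonneg (Real.sqrt_nonneg _)] using congrArg norm h₁
  obtain rfl : t = t' := (Real.sqrt_inj ht ht').1 hsqrt
  refine ⟨?_, rfl⟩
  rcases eq_or_ne t 0 with rfl | ht₀
  · exact star_injective (by simpa [pageParam, hu] using h₂)
  · exact mul_left_cancel₀ (by simpa [Real.sqrt_eq_zero ht] using ht₀) h₁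

theorem exists_pageParam_eq (hu : ‖u‖ = 1) {p : ℂ × ℂ} (hp : p ∈ pageA u ∪ hopfLink) :
    ∃ w t, ‖w‖ = 1 ∧ t ∈ Icc (0 : ℝ) 1 ∧ pageParam u w t = p := by
  obtain ⟨z₁, z₂⟩ := p
  obtain ⟨hS3, hprod⟩ : ‖z₁‖ ^ 2 + ‖z₂‖ ^ 2 = 1 ∧ z₁ * z₂ = (‖z₁ * z₂‖ : ℂ) * u := by
    rwa [pageA_union_hopfLink] at hp
  rcases eq_or_ne z₁ 0 with rfl | hz₁
  · have hz₂ : ‖z₂‖ = 1 :=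
      (pow_eq_one_iff_of_nonneg (norm_nonneg _) two_ne_zero).1 (by simpa using hS3)
    have huu : u * conj u = 1 := by
      rw [Complex.mul_conj, Complex.normSq_eq_norm_sq, hu]; norm_num
    refine ⟨u * conj z₂, 0, by simp [hu, hz₂], left_mem_Icc.2 zero_le_one, ?_⟩
    simp only [pageParam, Real.sqrt_zero, sub_zero, Real.sqrt_one, map_mul, Complex.conj_conj,
      Complex.ofReal_zero, Complex.ofReal_one, zero_mul, one_mul, Prod.mk.injEq, true_and]
    linear_combination z₂ * huu
  · set r := ‖z₁‖ with hr
    have hr₀ : 0 < r := norm_pos_iff.2 hz₁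
    have hs : √(1 - r ^ 2) = ‖z₂‖ := by
      rw [← Real.sqrt_sq (norm_nonneg z₂)]; congr 1; linarith
    have hc : z₁ * conj z₁ = (r : ℂ) ^ 2 := by
      rw [Complex.mul_conj, Complex.normSq_eq_norm_sq]; push_cast; rfl
    refine ⟨z₁ / r, r ^ 2, by simp [hr, hz₁], ⟨by positivity, by nlinarith [norm_nonneg z₂]⟩, ?_⟩
    simp only [pageParam, Real.sqrt_sq hr₀.le, hs, Prod.mk.injEq, map_div₀, Complex.conj_ofReal]
    have hr₀' : (r : ℂ) ≠ 0 := by exact_mod_cast hr₀.ne'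
    refine ⟨by field_simp, mul_left_cancel₀ hz₁ ?_⟩
    rw [hprod, norm_mul, ← hr, Complex.ofReal_mul]
    field_simp
    linear_combination (‖z₂‖ * u : ℂ) * hc

end pageParam

def annulusParam (u : ℂ) (q : S1 × Icc (0 : ℝ) 1) : ℂ × ℂ :=
  pageParam u q.1 q.2

theorem continuous_annulusParam (u : ℂ) : Continuous (annulusParam u) :=
  (continuous_pageParam u).comp (continuous_subtype_val.prodMap continuous_subtype_val)

theorem annulusParam_injective {u : ℂ} (hu : u ≠ 0) : Function.Injective (annulusParam u) := by
  rintro ⟨w, t⟩ ⟨w', t'⟩ h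
  obtain ⟨hw, ht⟩ := eq_and_eq_of_pageParam_eq hu w.2 w'.2 t.2.1 t'.2.1 h
  exact Prod.ext (Subtype.ext hw) (Subtype.ext ht)

theorem range_annulusParam {u : ℂ} (hu : ‖u‖ = 1) : range (annulusParam u) = pageA u ∪ hopfLink := by
  refine (range_subset_iff.2 fun q => pageParam_mem_pageA_union_hopfLink hu q.1.2 q.2.2).antisymm ?_
  intro p hp
  obtain ⟨w, t, hw, ht, rfl⟩ := exists_pageParam_eq hu hp
  exact ⟨(⟨w, hw⟩, ⟨t, ht⟩), rfl⟩

theorem hopfLink_subset_closure_pageA {u : ℂ} (hu : ‖u‖ = 1) : hopfLink ⊆ closure (pageA u) := by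
  intro p hp
  obtain ⟨w, t, hw, ht, rfl⟩ := exists_pageParam_eq hu (Or.inr hp)
  have harc : Continuous (pageParam u w) :=
    (continuous_pageParam u).comp (Continuous.prodMk_right w)
  have hmaps : MapsTo (pageParam u w) (Ioo 0 1) (pageA u) := fun s hs =>
    (pageParam_mem_pageA_iff hu hw (Ioo_subset_Icc_self hs)).2 hs
  refine closure_mono hmaps.image_subset (image_closure_subset_closure_image harc ⟨t, ?_, rfl⟩)
  rwa [closure_Ioo zero_ne_one]

theorem closure_pageA {u : ℂ} (hu : ‖u‖ = 1) : closure (pageA u) = pageA u ∪ hopfLink :=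
  (closure_minimal subset_union_left (isClosed_pageA_union_hopfLink u)).antisymm
    (union_subset subset_closure (hopfLink_subset_closure_pageA hu))

/-- For each `u ∈ S¹`, the closure of the page `A_u = π₊⁻¹({u})` equals `A_u ∪ H`, and
this closure is homeomorphic to the closed annulus `S¹ × [0,1]` by a homeomorphism
carrying `A_u` onto `S¹ × (0,1)` and `H` onto `S¹ × {0,1}`. -/
theorem open_book_positive_hopf_page_closure (u : ℂ) (hu : ‖u‖ = 1) :
    closure (pageA u) = pageA u ∪ hopfLink ∧
    ∃ h : (closure (pageA u) : Set (ℂ × ℂ)) ≃ₜ (↥S1 × ↥(Set.Icc (0:ℝ) 1)),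
      (∀ p : (closure (pageA u) : Set (ℂ × ℂ)),
        (p.val ∈ pageA u ↔ ((h p).2 : ℝ) ∈ Set.Ioo (0:ℝ) 1)) ∧
      (∀ p : (closure (pageA u) : Set (ℂ × ℂ)),
        (p.val ∈ hopfLink ↔ (((h p).2 : ℝ) = 0 ∨ ((h p).2 : ℝ) = 1))) := by
  have hu₀ : u ≠ 0 := norm_ne_zero_iff.1 (by rw [hu]; exact one_ne_zero)
  obtain ⟨h, hh⟩ := exists_homeomorph_of_range_eq (continuous_annulusParam u)
    (annulusParam_injective hu₀) ((range_annulusParam hu).trans (closure_pageA hu).symm)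
  refine ⟨closure_pageA hu, h, fun p => ?_, fun p => ?_⟩
  · rw [← hh p]
    exact pageParam_mem_pageA_iff hu (h p).1.2 (h p).2.2
  · rw [← hh p]
    exact pageParam_mem_hopfLink_iff hu (h p).1.2 (h p).2.2
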